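/- Certified lower bound: the optimal value d* of the reduced dual LP (D̄) satisfies d* ≤ p*, where p* is the optimal value of the polynomial optimization problem (P). Equivalently, for every feasible point (t,λ,μ) of (D̄) and every x ∈ R with a_i·x ≤ b_i (i ∈ I) and c_j·x = d_j (j ∈ J), one has t ≤ p(x). -/

import Mathlib

/-!
The Lagrangian `L(z) = q(z) + ∑ λᵢ (aᵢ'·z - bᵢ) + ∑ μⱼ (cⱼ'·z - dⱼ)` of the lifted problem is
multi-affine, hence concave in each coordinate, so its minimum over the box `R'` is attained at a
vertex. Being symmetric within blocks, `L` takes the same value at a vertex as at the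
representative `vrep` of its class, where dual feasibility says `t ≤ L`. On the diagonal
`z = (x,…,x)` the Lagrangian is `p(x) + ∑ λᵢ (aᵢ·x - bᵢ) ≤ p(x)` for feasible `x`: weak duality.
As both (P) and (D̄) are feasible, `d* ≤ p*` follows.
-/

open Finset

/-- The normalized elementary symmetric polynomial
`B_{l,δ}(z) = binom(δ,l)⁻¹ ∑_{1≤σ₁<⋯<σ_l≤δ} z_{σ₁}⋯z_{σ_l}`. -/
noncomputable def normEsymm (δ l : ℕ) (z : Fin δ → ℝ) : ℝ :=
  ((δ.choose l : ℝ))⁻¹ * ∑ s ∈ Finset.powersetCard l (Finset.univ : Finset (Fin δ)),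
    ∏ i ∈ s, z i

/-- The polynomial `p(x) = ∑_{l ∈ Δ} c_l x₁^{l₁}⋯x_n^{l_n}` with coefficients `c`,
where `Δ = {0,…,δ₁} × ⋯ × {0,…,δ_n}`. -/
noncomputable def polyOf {n : ℕ} {δ : Fin n → ℕ} (c : (∀ k, Fin (δ k + 1)) → ℝ)
    (x : Fin n → ℝ) : ℝ :=
  ∑ l : ∀ k, Fin (δ k + 1), c l * ∏ k, x k ^ (l k : ℕ)

/-- The blossom `q(z) = ∑_{l ∈ Δ} c_l ∏_k B_{l_k,δ_k}(z_{k,1},…,z_{k,δ_k})` of the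
polynomial with coefficients `c`. -/
noncomputable def blossomOf {n : ℕ} {δ : Fin n → ℕ} (c : (∀ k, Fin (δ k + 1)) → ℝ)
    (z : ∀ k, Fin (δ k) → ℝ) : ℝ :=
  ∑ l : ∀ k, Fin (δ k + 1), c l * ∏ k, normEsymm (δ k) (l k) (z k)

/-- A function of the blocked variables `z = (z_{k,i})` is multi-affine if it is affine
(degree at most 1) in each single argument `z_{k,i}`. -/
def MultiAffineB {n : ℕ} (δ : Fin n → ℕ) (q : (∀ k, Fin (δ k) → ℝ) → ℝ) : Prop :=
  ∀ (k : Fin n) (i : Fin (δ k)) (z : ∀ k, Fin (δ k) → ℝ) (s t θ : ℝ),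
    q (Function.update z k (Function.update (z k) i (θ * s + (1 - θ) * t)))
      = θ * q (Function.update z k (Function.update (z k) i s))
        + (1 - θ) * q (Function.update z k (Function.update (z k) i t))

/-- `z ≅ z'` : each block of `z` is a permutation of the corresponding block of `z'`. -/
def BlockRel {n : ℕ} (δ : Fin n → ℕ) (z z' : ∀ k, Fin (δ k) → ℝ) : Prop :=
  ∀ k, ∃ π : Equiv.Perm (Fin (δ k)), ∀ i, z k i = z' k (π i)


/-- Euclidean dot product on `ℝ^n`. -/
def dotp {n : ℕ} (u x : Fin n → ℝ) : ℝ := ∑ k, u k * x k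

/-- The lifted linear form: for `w ∈ ℝ^n`, `w' · z = ∑_k ∑_i (w k / δ k) * z k i`. -/
noncomputable def aLift {n : ℕ} (δ : Fin n → ℕ) (w : Fin n → ℝ)
    (z : ∀ k, Fin (δ k) → ℝ) : ℝ :=
  ∑ k, ∑ i : Fin (δ k), (w k / (δ k : ℝ)) * z k i

/-- The canonical representative of the equivalence class of vertices of `R'` whose
`k`-th block has exactly `ℓ k` coordinates equal to `hi k`. -/
noncomputable def vrep {n : ℕ} (δ : Fin n → ℕ) (lo hi : Fin n → ℝ)
    (ℓ : ∀ k, Fin (δ k + 1)) (k : Fin n) (i : Fin (δ k)) : ℝ :=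
  if (i : ℕ) < (ℓ k : ℕ) then hi k else lo k

theorem le_of_le_vertices_of_concaveOn_update {ι : Type*} [Fintype ι] [DecidableEq ι]
    {lo hi : ι → ℝ} {G : (ι → ℝ) → ℝ} {t : ℝ}
    (hG : ∀ x i, ConcaveOn ℝ (Set.Icc (lo i) (hi i)) fun v => G (Function.update x i v))
    (hvert : ∀ x, (∀ i, x i = lo i ∨ x i = hi i) → t ≤ G x)
    {x : ι → ℝ} (hx : ∀ i, x i ∈ Set.Icc (lo i) (hi i)) : t ≤ G x := by
  suffices h : ∀ S : Finset ι, ∀ x : ι → ℝ, (∀ i, x i ∈ Set.Icc (lo i) (hi i)) →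
      (∀ i ∉ S, x i = lo i ∨ x i = hi i) → t ≤ G x from
    h univ x hx fun i hi => absurd (mem_univ i) hi
  intro S
  induction S using Finset.induction_on with
  | empty => exact fun x _ hv => hvert x fun i => hv i (notMem_empty i)
  | insert a S _ ih =>
    intro x hx hv
    have hlo : lo a ∈ Set.Icc (lo a) (hi a) := ⟨le_rfl, (hx a).1.trans (hx a).2⟩
    have hhi : hi a ∈ Set.Icc (lo a) (hi a) := ⟨(hx a).1.trans (hx a).2, le_rfl⟩
    have hend : ∀ v, (v = lo a ∨ v = hi a) → t ≤ G (Function.update x a v) := by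
      intro v hva
      have hv_mem : v ∈ Set.Icc (lo a) (hi a) := by rcases hva with rfl | rfl <;> assumption
      refine ih _ (fun i => ?_) (fun i hi => ?_) <;> rcases eq_or_ne i a with rfl | hia
      · simpa using hv_mem
      · simpa [hia] using hx i
      · simpa using hva
      · simpa [hia] using hv i (by simp [hia, hi])
    calc t ≤ min (G (Function.update x a (lo a))) (G (Function.update x a (hi a))) :=
          le_min (hend _ (.inl rfl)) (hend _ (.inr rfl))
      _ ≤ G (Function.update x a (x a)) := (hG x a).min_le_of_mem_Icc hlo hhi (hx a)
      _ = G x := by rw [Function.update_eq_self]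

namespace MultiAffineB

variable {n : ℕ} {δ : Fin n → ℕ} {F G : (∀ k, Fin (δ k) → ℝ) → ℝ}

theorem add (hF : MultiAffineB δ F) (hG : MultiAffineB δ G) :
    MultiAffineB δ fun z => F z + G z := by
  intro k i z s t θ
  dsimp only
  rw [hF, hG]
  ring

theorem const_mul (r : ℝ) (hF : MultiAffineB δ F) : MultiAffineB δ fun z => r * F z := by
  intro k i z s t θ
  dsimp only
  rw [hF]
  ring

theorem sum {ι : Type*} (s : Finset ι) {F : ι → (∀ k, Fin (δ k) → ℝ) → ℝ}
    (hF : ∀ j ∈ s, MultiAffineB δ (F j)) : MultiAffineB δ fun z => ∑ j ∈ s, F j z := by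
  intro k i z u v θ
  simp only [Finset.mul_sum, ← Finset.sum_add_distrib]
  exact Finset.sum_congr rfl fun j hj => hF j hj k i z u v θ

theorem concaveOn_update (hF : MultiAffineB δ F) (z : ∀ k, Fin (δ k) → ℝ) (k : Fin n)
    (i : Fin (δ k)) {s : Set ℝ} (hs : Convex ℝ s) :
    ConcaveOn ℝ s fun v => F (Function.update z k (Function.update (z k) i v)) := by
  refine ⟨hs, fun u _ v _ α β _ _ hαβ => ?_⟩
  obtain rfl : β = 1 - α := by linarith
  exact (hF k i z u v α).ge

theorem le_of_le_vertices (hF : MultiAffineB δ F) {lo hi : Fin n → ℝ} {t : ℝ}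
    (hvert : ∀ z : ∀ k, Fin (δ k) → ℝ, (∀ k i, z k i = lo k ∨ z k i = hi k) → t ≤ F z)
    {z : ∀ k, Fin (δ k) → ℝ} (hz : ∀ k i, z k i ∈ Set.Icc (lo k) (hi k)) : t ≤ F z := by
  refine le_of_le_vertices_of_concaveOn_update (G := fun x => F (Sigma.curry x))
    (lo := fun σ => lo σ.1) (hi := fun σ => hi σ.1) (fun x σ => ?_)
    (fun x hx => hvert _ fun k i => ?_) (x := Sigma.uncurry z) fun σ => hz σ.1 σ.2
  · simp only [Sigma.curry_update]
    exact hF.concaveOn_update _ _ _ (convex_Icc _ _)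
  · exact hx ⟨k, i⟩

end MultiAffineB

theorem aLift_update {n : ℕ} (δ : Fin n → ℕ) (w : Fin n → ℝ) (z : ∀ k, Fin (δ k) → ℝ)
    (k : Fin n) (i : Fin (δ k)) (v : ℝ) :
    aLift δ w (Function.update z k (Function.update (z k) i v))
      = aLift δ w z + w k / δ k * (v - z k i) := by
  rw [← sub_eq_iff_eq_add', aLift, aLift, ← Finset.sum_sub_distrib,
    Finset.sum_eq_single_of_mem k (mem_univ k) fun k' _ hk' => by simp [hk'],
    ← Finset.sum_sub_distrib,
    Finset.sum_eq_single_of_mem i (mem_univ i) fun i' _ hi' => by simp [hi']]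
  simp only [Function.update_self]
  ring

theorem multiAffineB_aLift_sub {n : ℕ} (δ : Fin n → ℕ) (w : Fin n → ℝ) (β : ℝ) :
    MultiAffineB δ fun z => aLift δ w z - β := by
  intro k i z s t θ
  simp only [aLift_update]
  ring

theorem aLift_eq_of_blockRel {n : ℕ} {δ : Fin n → ℕ} (w : Fin n → ℝ)
    {z z' : ∀ k, Fin (δ k) → ℝ} (h : BlockRel δ z z') : aLift δ w z = aLift δ w z' := by
  refine Finset.sum_congr rfl fun k _ => ?_
  obtain ⟨π, hπ⟩ := h k
  simp only [hπ]
  exact Equiv.sum_comp π fun i => w k / δ k * z' k i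

theorem aLift_diag {n : ℕ} {δ : Fin n → ℕ} (hδ : ∀ k, 1 ≤ δ k) (w x : Fin n → ℝ) :
    aLift δ w (fun k _ => x k) = dotp w x := by
  refine Finset.sum_congr rfl fun k _ => ?_
  have : (δ k : ℝ) ≠ 0 := Nat.cast_ne_zero.mpr (Nat.one_le_iff_ne_zero.mp (hδ k))
  rw [Finset.sum_const, Finset.card_univ, Fintype.card_fin, nsmul_eq_mul]
  field_simp

theorem Fin.exists_perm_eq_ite_val_lt {α : Type*} {m : ℕ} {u v : α} (f : Fin m → α)
    (hf : ∀ i, f i = u ∨ f i = v) :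
    ∃ (l : Fin (m + 1)) (π : Equiv.Perm (Fin m)), ∀ i, f i = if (π i : ℕ) < l then v else u := by
  classical
  set s : Finset (Fin m) := {i | f i = v}
  have hs : s.card ≤ m := (card_le_univ s).trans_eq (Fintype.card_fin m)
  obtain ⟨π, hπ⟩ := Equiv.Perm.exists_map_finset_eq s {i | (i : ℕ) < s.card}
    (by rw [Fin.card_filter_val_lt, min_eq_right hs])
  refine ⟨⟨s.card, Nat.lt_succ_of_le hs⟩, π, fun i => ?_⟩
  have hmem := Finset.mem_map' π.toEmbedding (a := i) (s := s)
  rw [hπ] at hmem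
  simp only [Equiv.coe_toEmbedding, Finset.mem_filter, mem_univ, true_and, s] at hmem
  split_ifs with h
  · exact hmem.mp h
  · exact (hf i).resolve_right (mt hmem.mpr h)

theorem exists_blockRel_vrep {n : ℕ} (δ : Fin n → ℕ) {lo hi : Fin n → ℝ}
    {z : ∀ k, Fin (δ k) → ℝ} (hz : ∀ k i, z k i = lo k ∨ z k i = hi k) :
    ∃ ℓ, BlockRel δ z (vrep δ lo hi ℓ) := by
  choose ℓ π hπ using fun k => Fin.exists_perm_eq_ite_val_lt (z k) (hz k)
  exact ⟨ℓ, fun k => ⟨π k, hπ k⟩⟩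

section Lagrangian

variable {n mI mJ : ℕ} {δ : Fin n → ℕ} {q : (∀ k, Fin (δ k) → ℝ) → ℝ}
  {a : Fin mI → Fin n → ℝ} {b : Fin mI → ℝ} {c : Fin mJ → Fin n → ℝ} {d : Fin mJ → ℝ}
  {lam : Fin mI → ℝ} {mu : Fin mJ → ℝ}

variable (δ q a b c d lam mu) in
noncomputable def lagrangian (z : ∀ k, Fin (δ k) → ℝ) : ℝ :=
  q z + ∑ i, lam i * (aLift δ (a i) z - b i) + ∑ j, mu j * (aLift δ (c j) z - d j)

theorem multiAffineB_lagrangian (hq : MultiAffineB δ q) :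
    MultiAffineB δ (lagrangian δ q a b c d lam mu) :=
  (hq.add (.sum _ fun i _ => (multiAffineB_aLift_sub δ (a i) (b i)).const_mul (lam i))).add
    (.sum _ fun j _ => (multiAffineB_aLift_sub δ (c j) (d j)).const_mul (mu j))

theorem lagrangian_eq_of_blockRel
    (hq : ∀ z z' : ∀ k, Fin (δ k) → ℝ, BlockRel δ z z' → q z = q z')
    {z z' : ∀ k, Fin (δ k) → ℝ} (h : BlockRel δ z z') :
    lagrangian δ q a b c d lam mu z = lagrangian δ q a b c d lam mu z' := by
  simp only [lagrangian, hq z z' h, aLift_eq_of_blockRel _ h]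

theorem lagrangian_diag_le {p : (Fin n → ℝ) → ℝ} (hδ : ∀ k, 1 ≤ δ k)
    (hqdiag : ∀ x : Fin n → ℝ, q (fun k _ => x k) = p x) (hlam : ∀ i, 0 ≤ lam i)
    {x : Fin n → ℝ} (hax : ∀ i, dotp (a i) x ≤ b i) (hcx : ∀ j, dotp (c j) x = d j) :
    lagrangian δ q a b c d lam mu (fun k _ => x k) ≤ p x := by
  have hineq : ∑ i, lam i * (dotp (a i) x - b i) ≤ 0 :=
    Finset.sum_nonpos fun i _ => mul_nonpos_of_nonneg_of_nonpos (hlam i) (by linarith [hax i])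
  have heq : ∑ j, mu j * (dotp (c j) x - d j) = 0 :=
    Finset.sum_eq_zero fun j _ => by rw [hcx j, sub_self, mul_zero]
  simp only [lagrangian, aLift_diag hδ, hqdiag]
  linarith

theorem le_of_dual_feasible {lo hi : Fin n → ℝ} {p : (Fin n → ℝ) → ℝ} {t : ℝ}
    (hδ : ∀ k, 1 ≤ δ k) (hqma : MultiAffineB δ q)
    (hqsym : ∀ z z' : ∀ k, Fin (δ k) → ℝ, BlockRel δ z z' → q z = q z')
    (hqdiag : ∀ x : Fin n → ℝ, q (fun k _ => x k) = p x) (hlam : ∀ i, 0 ≤ lam i)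
    (hdual : ∀ ℓ, t ≤ lagrangian δ q a b c d lam mu (vrep δ lo hi ℓ))
    {x : Fin n → ℝ} (hx : ∀ k, x k ∈ Set.Icc (lo k) (hi k))
    (hax : ∀ i, dotp (a i) x ≤ b i) (hcx : ∀ j, dotp (c j) x = d j) : t ≤ p x := by
  have hvert (z : ∀ k, Fin (δ k) → ℝ) (hz : ∀ k i, z k i = lo k ∨ z k i = hi k) :
      t ≤ lagrangian δ q a b c d lam mu z := by
    obtain ⟨ℓ, hℓ⟩ := exists_blockRel_vrep δ hz
    exact (hdual ℓ).trans_eq (lagrangian_eq_of_blockRel hqsym hℓ).symm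
  calc t ≤ lagrangian δ q a b c d lam mu (fun k _ => x k) :=
        (multiAffineB_lagrangian hqma).le_of_le_vertices hvert fun k _ => hx k
    _ ≤ p x := lagrangian_diag_le hδ hqdiag hlam hax hcx

end Lagrangian

theorem stmt_10_general {n mI mJ : ℕ} (δ : Fin n → ℕ) (hδ : ∀ k, 1 ≤ δ k)
    (lo hi : Fin n → ℝ)
    (p : (Fin n → ℝ) → ℝ) (q : (∀ k, Fin (δ k) → ℝ) → ℝ)
    (hqma : MultiAffineB δ q)
    (hqsym : ∀ z z' : ∀ k, Fin (δ k) → ℝ, BlockRel δ z z' → q z = q z')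
    (hqdiag : ∀ x : Fin n → ℝ, q (fun k _ => x k) = p x)
    (a : Fin mI → Fin n → ℝ) (b : Fin mI → ℝ)
    (c : Fin mJ → Fin n → ℝ) (d : Fin mJ → ℝ)
    (hfeas : ∃ x : Fin n → ℝ, (∀ k, x k ∈ Set.Icc (lo k) (hi k)) ∧
      (∀ i, dotp (a i) x ≤ b i) ∧ (∀ j, dotp (c j) x = d j)) :
    (sSup {t : ℝ | ∃ (lam : Fin mI → ℝ) (mu : Fin mJ → ℝ), (∀ i, 0 ≤ lam i) ∧
        ∀ ℓ : ∀ k, Fin (δ k + 1),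
          t ≤ q (vrep δ lo hi ℓ) + ∑ i, lam i * (aLift δ (a i) (vrep δ lo hi ℓ) - b i)
              + ∑ j, mu j * (aLift δ (c j) (vrep δ lo hi ℓ) - d j)}
      ≤ sInf {y : ℝ | ∃ x : Fin n → ℝ, (∀ k, x k ∈ Set.Icc (lo k) (hi k)) ∧
          (∀ i, dotp (a i) x ≤ b i) ∧ (∀ j, dotp (c j) x = d j) ∧ y = p x})
    ∧
    (∀ (t : ℝ) (lam : Fin mI → ℝ) (mu : Fin mJ → ℝ), (∀ i, 0 ≤ lam i) →
      (∀ ℓ : ∀ k, Fin (δ k + 1),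
        t ≤ q (vrep δ lo hi ℓ) + ∑ i, lam i * (aLift δ (a i) (vrep δ lo hi ℓ) - b i)
            + ∑ j, mu j * (aLift δ (c j) (vrep δ lo hi ℓ) - d j)) →
      ∀ x : Fin n → ℝ, (∀ k, x k ∈ Set.Icc (lo k) (hi k)) →
        (∀ i, dotp (a i) x ≤ b i) → (∀ j, dotp (c j) x = d j) →
        t ≤ p x) := by
  refine ⟨?_, fun t lam mu hlam hdual x hx hax hcx =>
    le_of_dual_feasible hδ hqma hqsym hqdiag hlam hdual hx hax hcx⟩
  obtain ⟨x, hx, hax, hcx⟩ := hfeas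
  -- With `λ = μ = 0`, any lower bound of `q` on the finitely many representatives is dual feasible.
  obtain ⟨t₀, ht₀⟩ := Finite.bddBelow_range fun ℓ : ∀ k, Fin (δ k + 1) => q (vrep δ lo hi ℓ)
  refine le_csInf ⟨p x, x, hx, hax, hcx, rfl⟩ fun y ⟨x', hx', hax', hcx', hy⟩ => hy ▸ ?_
  refine csSup_le ⟨t₀, 0, 0, fun _ => le_rfl, fun ℓ => by simpa using ht₀ ⟨ℓ, rfl⟩⟩ ?_
  rintro t ⟨lam, mu, hlam, hdual⟩
  exact le_of_dual_feasible hδ hqma hqsym hqdiag hlam hdual hx' hax' hcx'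

/-- Certified lower bound: the optimal value `d*` of the reduced dual LP (D̄)
satisfies `d* ≤ p*`, where `p*` is the optimal value of the polynomial optimization
problem (P); equivalently, for every feasible point `(t,λ,μ)` of (D̄) and every
feasible `x` of (P), one has `t ≤ p x`. -/
theorem stmt_10 {n mI mJ : ℕ} (δ : Fin n → ℕ) (hδ : ∀ k, 1 ≤ δ k)
    (lo hi : Fin n → ℝ) (hlt : ∀ k, lo k < hi k)
    (p : (Fin n → ℝ) → ℝ) (q : (∀ k, Fin (δ k) → ℝ) → ℝ)
    (hqma : MultiAffineB δ q)
    (hqsym : ∀ z z' : ∀ k, Fin (δ k) → ℝ, BlockRel δ z z' → q z = q z')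
    (hqdiag : ∀ x : Fin n → ℝ, q (fun k _ => x k) = p x)
    (a : Fin mI → Fin n → ℝ) (b : Fin mI → ℝ)
    (c : Fin mJ → Fin n → ℝ) (d : Fin mJ → ℝ)
    (hfeas : ∃ x : Fin n → ℝ, (∀ k, x k ∈ Set.Icc (lo k) (hi k)) ∧
      (∀ i, dotp (a i) x ≤ b i) ∧ (∀ j, dotp (c j) x = d j)) :
    (sSup {t : ℝ | ∃ (lam : Fin mI → ℝ) (mu : Fin mJ → ℝ), (∀ i, 0 ≤ lam i) ∧
        ∀ ℓ : ∀ k, Fin (δ k + 1),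
          t ≤ q (vrep δ lo hi ℓ) + ∑ i, lam i * (aLift δ (a i) (vrep δ lo hi ℓ) - b i)
              + ∑ j, mu j * (aLift δ (c j) (vrep δ lo hi ℓ) - d j)}
      ≤ sInf {y : ℝ | ∃ x : Fin n → ℝ, (∀ k, x k ∈ Set.Icc (lo k) (hi k)) ∧
          (∀ i, dotp (a i) x ≤ b i) ∧ (∀ j, dotp (c j) x = d j) ∧ y = p x})
    ∧
    (∀ (t : ℝ) (lam : Fin mI → ℝ) (mu : Fin mJ → ℝ), (∀ i, 0 ≤ lam i) →
      (∀ ℓ : ∀ k, Fin (δ k + 1),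
        t ≤ q (vrep δ lo hi ℓ) + ∑ i, lam i * (aLift δ (a i) (vrep δ lo hi ℓ) - b i)
            + ∑ j, mu j * (aLift δ (c j) (vrep δ lo hi ℓ) - d j)) →
      ∀ x : Fin n → ℝ, (∀ k, x k ∈ Set.Icc (lo k) (hi k)) →
        (∀ i, dotp (a i) x ≤ b i) → (∀ j, dotp (c j) x = d j) →
        t ≤ p x) :=
  stmt_10_general δ hδ lo hi p q hqma hqsym hqdiag a b c d hfeas
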